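/- Let A, B be n×n complex positive definite matrices. If A ≥ I and A ◇_t B ≤ I (Loewner order) for some t ∈ (0, 1), then for all p ≥ 1 and all s ∈ [0, 1]: A^p ◇_s B^p ≤ (1/(1 − t + t·λ_n(A^{-1} ♯ B)))^{2p} · I, where λ_n(A^{-1} ♯ B) is the smallest eigenvalue of A^{-1} ♯ B. -/

import Mathlib

/-!
Write `G = A⁻¹ ♯ B`, so that `G A G = B`, and `M = (1 - t) I + t G = m(G)` with
`m x = 1 - t + t x`. From `I ≤ A` and `M A M ≤ I` we get `M² ≤ I`, so the spectrum of `G` lies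
in `[0, 1]`. Conjugating `M A M ≤ I` by `M⁻¹` gives `A ≤ M⁻² ≤ c⁻² I` with `c = m(λₙ(G))`, and
then `B = G A G ≤ c⁻² G² ≤ c⁻² I`. Hence `Aᵖ, Bᵖ ≤ c⁻²ᵖ I`, and the Wasserstein mean of two
matrices lies below their arithmetic mean, because
`(1 - s) X + s Y - X ◇ₛ Y = s (1 - s) (I - G') X (I - G')` whenever `Y = G' X G'`.
-/

open scoped ComplexOrder Matrix

noncomputable section

/-- Real power of a (positive definite) matrix via the continuous functional calculus. -/
def mpow {n : ℕ} (A : Matrix (Fin n) (Fin n) ℂ) (t : ℝ) : Matrix (Fin n) (Fin n) ℂ :=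
  cfc (fun x : ℝ => x ^ t) A

/-- The matrix logarithm of a (positive definite) matrix via the continuous functional calculus. -/
def mlog {n : ℕ} (A : Matrix (Fin n) (Fin n) ℂ) : Matrix (Fin n) (Fin n) ℂ :=
  cfc Real.log A

/-- The metric geometric mean `A ♯ₜ B = A^{1/2} (A^{-1/2} B A^{-1/2})^t A^{1/2}`.
`A ♯ B` is `gmean A B (1/2)`. -/
def gmean {n : ℕ} (A B : Matrix (Fin n) (Fin n) ℂ) (t : ℝ) : Matrix (Fin n) (Fin n) ℂ :=
  mpow A (1/2) * mpow (mpow A (-(1/2)) * B * mpow A (-(1/2))) t * mpow A (1/2)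

/-- The Loewner order: `A ≤ B` iff `B - A` is positive semidefinite. -/
def LoewnerLE {n : ℕ} (A B : Matrix (Fin n) (Fin n) ℂ) : Prop :=
  (B - A).PosSemidef

/-- The near order: `A ⪯ B` iff `I ≤ A⁻¹ ♯ B` in the Loewner order. -/
def NearLE {n : ℕ} (A B : Matrix (Fin n) (Fin n) ℂ) : Prop :=
  LoewnerLE 1 (gmean A⁻¹ B (1/2))

/-- The spectral geometric mean `A ♮ₜ B = (A⁻¹ ♯ B)^t A (A⁻¹ ♯ B)^t`. -/
def smean {n : ℕ} (A B : Matrix (Fin n) (Fin n) ℂ) (t : ℝ) : Matrix (Fin n) (Fin n) ℂ :=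
  mpow (gmean A⁻¹ B (1/2)) t * A * mpow (gmean A⁻¹ B (1/2)) t

/-- The Wasserstein mean `A ◇ₜ B = [(1-t)I + t(A⁻¹ ♯ B)] A [(1-t)I + t(A⁻¹ ♯ B)]`. -/
def wmean {n : ℕ} (A B : Matrix (Fin n) (Fin n) ℂ) (t : ℝ) : Matrix (Fin n) (Fin n) ℂ :=
  (((1 - t : ℝ) : ℂ) • (1 : Matrix (Fin n) (Fin n) ℂ) + ((t : ℝ) : ℂ) • gmean A⁻¹ B (1/2)) * A *
    (((1 - t : ℝ) : ℂ) • (1 : Matrix (Fin n) (Fin n) ℂ) + ((t : ℝ) : ℂ) • gmean A⁻¹ B (1/2))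

/-- The arithmetic mean `A ∇ₜ B = (1-t)A + tB`. -/
def amean {n : ℕ} (A B : Matrix (Fin n) (Fin n) ℂ) (t : ℝ) : Matrix (Fin n) (Fin n) ℂ :=
  ((1 - t : ℝ) : ℂ) • A + ((t : ℝ) : ℂ) • B

/-- The matrix absolute value `|X| = (XᴴX)^{1/2}`. -/
def matAbs {n : ℕ} (X : Matrix (Fin n) (Fin n) ℂ) : Matrix (Fin n) (Fin n) ℂ :=
  mpow (Xᴴ * X) (1/2)

/-- The eigenvalues of a Hermitian matrix listed in nonincreasing order:
`eigDesc hA i` is `λ_{i+1}(A)`, so `eigDesc hA 0 = λ₁(A) ≥ eigDesc hA 1 = λ₂(A) ≥ ⋯`. -/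
def eigDesc {n : ℕ} {A : Matrix (Fin n) (Fin n) ℂ} (hA : A.IsHermitian) : Fin n → ℝ :=
  fun i => (hA.eigenvalues ∘ Tuple.sort hA.eigenvalues) i.rev

-- Under `MatrixOrder`, `A ≤ B` unfolds to `(B - A).PosSemidef`, which is `LoewnerLE A B`.
open scoped MatrixOrder

section ConjugateBounds

variable {𝒜 : Type*} [Ring 𝒜] [StarRing 𝒜] [PartialOrder 𝒜] [StarOrderedRing 𝒜]
  [TopologicalSpace 𝒜] [Algebra ℝ 𝒜] [ContinuousFunctionalCalculus ℝ 𝒜 IsSelfAdjoint]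

theorem le_cfc_inv_sq_of_cfc_conjugate_le_one {f : ℝ → ℝ} {a g : 𝒜}
    (hf0 : ∀ x ∈ spectrum ℝ g, f x ≠ 0) (hf : ContinuousOn f (spectrum ℝ g))
    (hg : IsSelfAdjoint g) (h : cfc f g * a * cfc f g ≤ 1) :
    a ≤ cfc (fun x => (f x)⁻¹ ^ 2) g := by
  set u := cfcUnits f g hf0 hf hg
  have hu : (u : 𝒜) = cfc f g := rfl
  have hu' : ((u⁻¹ : 𝒜ˣ) : 𝒜) = cfc (fun x => (f x)⁻¹) g := rfl
  have hu'_sa : IsSelfAdjoint ((u⁻¹ : 𝒜ˣ) : 𝒜) := cfc_predicate _ g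
  calc a = ↑u⁻¹ * (↑u * a * ↑u) * ↑u⁻¹ := by
        simp only [← mul_assoc, Units.inv_mul, one_mul]
        rw [mul_assoc, Units.mul_inv, mul_one]
    _ ≤ ↑u⁻¹ * 1 * ↑u⁻¹ := hu'_sa.conjugate_le_conjugate (hu ▸ h)
    _ = cfc (fun x => (f x)⁻¹ ^ 2) g := by
        rw [mul_one, hu', cfc_pow (fun x => (f x)⁻¹) 2 g (hf.inv₀ hf0), sq]

theorem le_algebraMap_of_cfc_conjugate_le_one {f : ℝ → ℝ} {a g : 𝒜} {c : ℝ} (hc : 0 < c)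
    (hcf : ∀ x ∈ spectrum ℝ g, c ≤ f x) (hf : ContinuousOn f (spectrum ℝ g))
    (hg : IsSelfAdjoint g) (h : cfc f g * a * cfc f g ≤ 1) :
    a ≤ algebraMap ℝ 𝒜 (c⁻¹ ^ 2) := by
  have hf0 : ∀ x ∈ spectrum ℝ g, f x ≠ 0 := fun x hx => (hc.trans_le (hcf x hx)).ne'
  refine (le_cfc_inv_sq_of_cfc_conjugate_le_one hf0 hf hg h).trans ?_
  refine cfc_le_algebraMap _ _ g (fun x hx => ?_) ((hf.inv₀ hf0).pow 2) hg
  exact pow_le_pow_left₀ (inv_nonneg.mpr (hc.le.trans (hcf x hx))) (inv_anti₀ hc (hcf x hx)) 2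

theorem abs_le_one_of_one_le_of_cfc_conjugate_le_one [NonnegSpectrumClass ℝ 𝒜] {f : ℝ → ℝ}
    {a g : 𝒜} (hf : ContinuousOn f (spectrum ℝ g)) (hg : IsSelfAdjoint g) (ha : 1 ≤ a)
    (h : cfc f g * a * cfc f g ≤ 1) : ∀ x ∈ spectrum ℝ g, |f x| ≤ 1 := by
  have hsq : cfc f g * 1 * cfc f g ≤ 1 :=
    ((cfc_predicate f g : IsSelfAdjoint _).conjugate_le_conjugate ha).trans h
  rw [mul_one, ← cfc_mul f f g hf hf, cfc_le_one_iff (fun x => f x * f x) g (hf.mul hf) hg] at hsq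
  exact fun x hx => abs_le_one_iff_mul_self_le_one.mpr (hsq x hx)

theorem conjugate_le_algebraMap_of_abs_spectrum_le_one {a g : 𝒜} {r : ℝ} (hr : 0 ≤ r)
    (hg : IsSelfAdjoint g) (hg1 : ∀ x ∈ spectrum ℝ g, |x| ≤ 1) (ha : a ≤ algebraMap ℝ 𝒜 r) :
    g * a * g ≤ algebraMap ℝ 𝒜 r := by
  have hgrg : g * algebraMap ℝ 𝒜 r * g = cfc (fun x => x * r * x) g := by
    rw [cfc_mul _ _ g, cfc_mul _ _ g, cfc_id' ℝ g, cfc_const r g]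
  refine (hg.conjugate_le_conjugate ha).trans (hgrg ▸ cfc_le_algebraMap _ _ g fun x hx => ?_)
  have := abs_le_one_iff_mul_self_le_one.mp (hg1 x hx)
  nlinarith

theorem cfc_rpow_le_algebraMap [NonnegSpectrumClass ℝ 𝒜] {a : 𝒜} {r p : ℝ} (hp : 0 ≤ p)
    (ha : 0 ≤ a) (har : a ≤ algebraMap ℝ 𝒜 r) :
    cfc (fun x : ℝ => x ^ p) a ≤ algebraMap ℝ 𝒜 (r ^ p) := by
  have hsa : IsSelfAdjoint a := IsSelfAdjoint.of_nonneg ha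
  rw [le_algebraMap_iff_spectrum_le hsa] at har
  exact cfc_le_algebraMap _ _ a (fun x hx =>
    Real.rpow_le_rpow (spectrum_nonneg_of_nonneg ha hx) (har x hx) hp)
    (Real.continuous_rpow_const hp).continuousOn hsa

end ConjugateBounds

theorem Matrix.IsHermitian.iInf_eigenvalues_le {ι 𝕜 : Type*} [Fintype ι] [DecidableEq ι]
    [RCLike 𝕜] {A : Matrix ι ι 𝕜} (hA : A.IsHermitian) {x : ℝ} (hx : x ∈ spectrum ℝ A) :
    ⨅ i, hA.eigenvalues i ≤ x := by
  obtain ⟨i, rfl⟩ := hA.spectrum_real_eq_range_eigenvalues ▸ hx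
  exact ciInf_le (Finite.bddBelow_range _) i

section Means

variable {n : ℕ}

local notation "𝕄" => Matrix (Fin n) (Fin n) ℂ

theorem algebraMap_eq_ofReal_smul_one (r : ℝ) : algebraMap ℝ 𝕄 r = ((r : ℝ) : ℂ) • 1 := by
  rw [Algebra.algebraMap_eq_smul_one, Complex.coe_smul]

theorem mpow_isSelfAdjoint (A : 𝕄) (r : ℝ) : IsSelfAdjoint (mpow A r) := cfc_predicate _ A

theorem mpow_add {A : 𝕄} (hA : A.PosDef) (r s : ℝ) : mpow A (r + s) = mpow A r * mpow A s := by
  rw [mpow, mpow, mpow, ← cfc_mul _ _ A (A.finite_real_spectrum.continuousOn _)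
    (A.finite_real_spectrum.continuousOn _)]
  exact cfc_congr fun x hx => Real.rpow_add (hA.isStrictlyPositive.spectrum_pos hx) r s

theorem mpow_add_of_nonneg {A : 𝕄} (hA : 0 ≤ A) {r s : ℝ} (hrs : r + s ≠ 0) :
    mpow A (r + s) = mpow A r * mpow A s := by
  rw [mpow, mpow, mpow, ← cfc_mul _ _ A (A.finite_real_spectrum.continuousOn _)
    (A.finite_real_spectrum.continuousOn _)]
  exact cfc_congr fun x hx => Real.rpow_add' (spectrum_nonneg_of_nonneg hA hx) hrs

theorem mpow_zero {A : 𝕄} (hA : A.IsHermitian) : mpow A 0 = 1 := by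
  simp only [mpow, Real.rpow_zero]
  exact cfc_const_one ℝ A hA

theorem mpow_one {A : 𝕄} (hA : A.IsHermitian) : mpow A 1 = A := by
  simp only [mpow, Real.rpow_one]
  exact cfc_id' ℝ A hA

theorem mpow_neg_one {A : 𝕄} (hA : A.PosDef) : mpow A (-1) = A⁻¹ := by
  refine (Matrix.inv_eq_left_inv ?_).symm
  nth_rewrite 2 [← mpow_one hA.isHermitian]
  rw [← mpow_add hA, neg_add_cancel, mpow_zero hA.isHermitian]

theorem mpow_nonneg {A : 𝕄} (hA : 0 ≤ A) (r : ℝ) : 0 ≤ mpow A r :=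
  cfc_nonneg fun _ hx => Real.rpow_nonneg (spectrum_nonneg_of_nonneg hA hx) r

theorem mpow_posDef {A : 𝕄} (hA : A.PosDef) (r : ℝ) : (mpow A r).PosDef := by
  refine Matrix.IsStrictlyPositive.posDef ((cfc_isStrictlyPositive_iff _ A
    (A.finite_real_spectrum.continuousOn _) hA.isHermitian).mpr fun x hx => ?_)
  exact Real.rpow_pos_of_pos (hA.isStrictlyPositive.spectrum_pos hx) r

theorem gmean_nonneg (X : 𝕄) {Y : 𝕄} (hY : 0 ≤ Y) (t : ℝ) : 0 ≤ gmean X Y t :=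
  (mpow_isSelfAdjoint X _).conjugate_nonneg
    (mpow_nonneg ((mpow_isSelfAdjoint X _).conjugate_nonneg hY) t)

theorem gmean_mul_inv_mul_gmean {X Y : 𝕄} (hX : X.PosDef) (hY : 0 ≤ Y) :
    gmean X Y (1/2) * X⁻¹ * gmean X Y (1/2) = Y := by
  set P := mpow X (1/2)
  set Q := mpow X (-(1/2))
  set S := Q * Y * Q
  set T := mpow S (1/2)
  have hS : 0 ≤ S := (mpow_isSelfAdjoint X _).conjugate_nonneg hY
  have hPQ : P * Q = 1 := by rw [← mpow_add hX, add_neg_cancel, mpow_zero hX.isHermitian]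
  have hQP : Q * P = 1 := by rw [← mpow_add hX, neg_add_cancel, mpow_zero hX.isHermitian]
  have hPXP : P * X⁻¹ * P = 1 := by
    rw [← mpow_neg_one hX, ← mpow_add hX, ← mpow_add hX,
      show (1/2 + -1 + 1/2 : ℝ) = 0 by norm_num, mpow_zero hX.isHermitian]
  have hTT : T * T = S := by
    rw [← mpow_add_of_nonneg hS (by norm_num), show (1/2 + 1/2 : ℝ) = 1 by norm_num,
      mpow_one hS.isSelfAdjoint]
  calc gmean X Y (1/2) * X⁻¹ * gmean X Y (1/2)
      = P * T * P * X⁻¹ * (P * T * P) := rfl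
    _ = P * T * (P * X⁻¹ * P) * T * P := by simp only [mul_assoc]
    _ = (P * Q) * Y * (Q * P) := by
        rw [hPXP, mul_one, mul_assoc P T T, hTT]
        simp only [S, mul_assoc]
    _ = Y := by rw [hPQ, hQP, one_mul, mul_one]

theorem gmean_inv_mul_mul_gmean_inv {A B : 𝕄} (hA : A.PosDef) (hB : 0 ≤ B) :
    gmean A⁻¹ B (1/2) * A * gmean A⁻¹ B (1/2) = B := by
  simpa only [A.nonsing_inv_nonsing_inv ((A.isUnit_iff_isUnit_det).mp hA.isUnit)] using
    gmean_mul_inv_mul_gmean hA.inv hB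

theorem cfc_one_sub_add_mul {G : 𝕄} (hG : G.IsHermitian) (t : ℝ) :
    cfc (fun x : ℝ => 1 - t + t * x) G = ((1 - t : ℝ) : ℂ) • 1 + ((t : ℝ) : ℂ) • G := by
  rw [cfc_const_add _ _ G, cfc_const_mul_id t G, algebraMap_eq_ofReal_smul_one,
    Complex.coe_smul t]

theorem wmean_le_amean {X Y : 𝕄} (hX : X.PosDef) (hY : 0 ≤ Y) {s : ℝ} (hs0 : 0 ≤ s)
    (hs1 : s ≤ 1) : wmean X Y s ≤ amean X Y s := by
  have hY' := gmean_inv_mul_mul_gmean_inv hX hY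
  have hG : IsSelfAdjoint (1 - gmean X⁻¹ Y (1/2)) :=
    IsSelfAdjoint.one _ |>.sub (gmean_nonneg _ hY _).isSelfAdjoint
  rw [← sub_nonneg]
  unfold amean wmean
  generalize gmean X⁻¹ Y (1/2) = G at hY' hG ⊢
  subst hY'
  have hgap : ((1 - s : ℝ) : ℂ) • X + ((s : ℝ) : ℂ) • (G * X * G) -
      (((1 - s : ℝ) : ℂ) • 1 + ((s : ℝ) : ℂ) • G) * X *
        (((1 - s : ℝ) : ℂ) • 1 + ((s : ℝ) : ℂ) • G) =
      ((s * (1 - s) : ℝ) : ℂ) • ((1 - G) * X * (1 - G)) := by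
    simp only [sub_mul, mul_sub, add_mul, mul_add, smul_mul_assoc, mul_smul_comm,
      one_mul, mul_one]
    push_cast
    module
  rw [hgap]
  exact smul_nonneg (Complex.zero_le_real.mpr (by nlinarith))
    (hG.conjugate_nonneg hX.posSemidef.nonneg)

theorem amean_le_algebraMap {X Y : 𝕄} {r s : ℝ} (hs0 : 0 ≤ s) (hs1 : s ≤ 1)
    (hX : X ≤ algebraMap ℝ 𝕄 r) (hY : Y ≤ algebraMap ℝ 𝕄 r) :
    amean X Y s ≤ algebraMap ℝ 𝕄 r := by
  unfold amean
  rw [Complex.coe_smul, Complex.coe_smul]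
  calc (1 - s) • X + s • Y ≤ (1 - s) • algebraMap ℝ 𝕄 r + s • algebraMap ℝ 𝕄 r := by gcongr
    _ = algebraMap ℝ 𝕄 r := by module

theorem wmean_mpow_le_algebraMap {X Y : 𝕄} (hX : X.PosDef) (hY : 0 ≤ Y) {r p s : ℝ}
    (hp : 0 ≤ p) (hs0 : 0 ≤ s) (hs1 : s ≤ 1) (hXr : X ≤ algebraMap ℝ 𝕄 r)
    (hYr : Y ≤ algebraMap ℝ 𝕄 r) : wmean (mpow X p) (mpow Y p) s ≤ algebraMap ℝ 𝕄 (r ^ p) :=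
  (wmean_le_amean (mpow_posDef hX p) (mpow_nonneg hY p) hs0 hs1).trans <|
    amean_le_algebraMap hs0 hs1 (cfc_rpow_le_algebraMap hp hX.posSemidef.nonneg hXr)
      (cfc_rpow_le_algebraMap hp hY hYr)

theorem le_algebraMap_of_wmean_le_one {A B : 𝕄} (hA : A.PosDef) (hB : 0 ≤ B) {t c : ℝ}
    (ht : 0 < t) (hc : 0 < c) (hcG : ∀ x ∈ spectrum ℝ (gmean A⁻¹ B (1/2)), c ≤ 1 - t + t * x)
    (hAI : 1 ≤ A) (hWI : wmean A B t ≤ 1) :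
    A ≤ algebraMap ℝ 𝕄 (c⁻¹ ^ 2) ∧ B ≤ algebraMap ℝ 𝕄 (c⁻¹ ^ 2) := by
  have hG := gmean_nonneg A⁻¹ hB (1/2)
  have hW : cfc (fun x : ℝ => 1 - t + t * x) (gmean A⁻¹ B (1/2)) * A *
      cfc (fun x : ℝ => 1 - t + t * x) (gmean A⁻¹ B (1/2)) ≤ 1 := by
    rwa [cfc_one_sub_add_mul hG.isSelfAdjoint]
  have hG1 : ∀ x ∈ spectrum ℝ (gmean A⁻¹ B (1/2)), |x| ≤ 1 := fun x hx => by
    have h1 := abs_le_one_of_one_le_of_cfc_conjugate_le_one (by fun_prop) hG.isSelfAdjoint hAI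
      hW x hx
    have h0 := spectrum_nonneg_of_nonneg hG hx
    rw [abs_le] at h1 ⊢
    constructor <;> nlinarith
  have hAc := le_algebraMap_of_cfc_conjugate_le_one hc hcG (by fun_prop) hG.isSelfAdjoint hW
  refine ⟨hAc, ?_⟩
  rw [← gmean_inv_mul_mul_gmean_inv hA hB]
  exact conjugate_le_algebraMap_of_abs_spectrum_le_one (by positivity) hG.isSelfAdjoint hG1 hAc

end Means

/-- if `A ≥ I` and `A ◇ₜ B ≤ I` for some `t ∈ (0,1)`, then for all `p ≥ 1`
and `s ∈ [0,1]`: `Aᵖ ◇ₛ Bᵖ ≤ (1/(1 − t + t λₙ(A⁻¹ ♯ B)))^{2p} I`, where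
`λₙ(A⁻¹ ♯ B) = ⨅ i, μ i` is the smallest eigenvalue of `A⁻¹ ♯ B`. -/
theorem wmean_power_upper_bound {n : ℕ} (A B : Matrix (Fin n) (Fin n) ℂ)
    (hA : A.PosDef) (hB : B.PosDef) (h : (gmean A⁻¹ B (1/2)).IsHermitian)
    (t : ℝ) (ht0 : 0 < t) (ht1 : t < 1)
    (hAI : LoewnerLE 1 A) (hWI : LoewnerLE (wmean A B t) 1) :
    ∀ p s : ℝ, 1 ≤ p → 0 ≤ s → s ≤ 1 →
      LoewnerLE (wmean (mpow A p) (mpow B p) s)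
        ((((1 / (1 - t + t * (⨅ i, h.eigenvalues i))) ^ (2 * p) : ℝ) : ℂ) •
          (1 : Matrix (Fin n) (Fin n) ℂ)) := by
  intro p s hp hs0 hs1
  have hG := gmean_nonneg A⁻¹ hB.posSemidef.nonneg (1/2)
  have hmin : 0 ≤ ⨅ i, h.eigenvalues i :=
    Real.iInf_nonneg (Matrix.nonneg_iff_posSemidef.mp hG).eigenvalues_nonneg
  have hc : 0 < 1 - t + t * ⨅ i, h.eigenvalues i := by nlinarith
  have hcG : ∀ x ∈ spectrum ℝ (gmean A⁻¹ B (1/2)),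
      1 - t + t * ⨅ i, h.eigenvalues i ≤ 1 - t + t * x := fun x hx => by
    have := h.iInf_eigenvalues_le hx
    nlinarith
  obtain ⟨hAc, hBc⟩ := le_algebraMap_of_wmean_le_one hA hB.posSemidef.nonneg ht0 hc hcG hAI hWI
  have key := wmean_mpow_le_algebraMap hA hB.posSemidef.nonneg (zero_le_one.trans hp) hs0 hs1
    hAc hBc
  rw [one_div]
  rwa [algebraMap_eq_ofReal_smul_one, ← Real.rpow_natCast, ← Real.rpow_mul (by positivity),
    Nat.cast_ofNat] at key
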